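/- arXiv:1602.02792 — 2 statements merged into one kernel-verified Lean document; each statement's English description precedes it below -/
import Mathlib

section
/- Let 0 < λ < 1 with λ ≥ c(K)/b(K), and let γ satisfy 0 ≤ γ ≤ (λ b(K) − c(K))/(1+λ). Define p(y) := (c(y) + (1+λ)γ)/(λ b(K)) for y ∈ [0,K]. Then 0 ≤ p(y) ≤ 1 for all y ∈ [0,K], and the reactive two-point strategy σ_X^0[y_0] = p(y_0) δ_K + (1−p(y_0)) δ_0, σ_X[x,y] = p(y) δ_K + (1−p(y)) δ_0 satisfies, with ψ(s) := b(s) − γ, the identity (b(x) − γ) + λ(−c(y) − γ) + ((1−λ²)/λ)(−c(y_0) − γ) = ψ(x) − λ² ∫ ψ dσ_X[x,y] − (1−λ²) ∫ ψ dσ_X^0[y_0] for all x, y, y_0 ∈ [0,K]. Consequently, in the strictly-alternating continuous Donation Game in which Y moves first, this strategy is an equalizer that unilaterally enforces π_Y = γ. -/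
/-!
Write `κ = (1 + λ)γ`. The definition of `p` makes every cost affine in the reaction
probability it triggers: `c(y) = λ b(K) p(y) − κ`. Since `b(0) = 0`, the benefit `F_t` that `X`
gives in round `t` is `b(K)` times the mean of `p` over `Y`'s previous move, so `Y`'s payoff in
round `t` is `F_t − λ² F_{t+1} + λκ`, and its opening cost is `−λ F_0 + κ`. With weights
`λ^{2t+1}` the differences telescope to `λ F_0`, which cancels against the opening move, and the
constants sum to `κ/(1 − λ²)`; normalising by `1 − λ` leaves `γ`. The autocratic identity is the
same substitution performed on a single round.
-/

open MeasureTheory Set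

noncomputable def twoPointMeasure {α : Type*} [MeasurableSpace α] (r : ℝ) (x y : α) : Measure α :=
  ENNReal.ofReal r • Measure.dirac x + ENNReal.ofReal (1 - r) • Measure.dirac y

section TwoPoint

variable {α β : Type*} [MeasurableSpace α] [MeasurableSpace β] {x y : α}

theorem integrable_twoPointMeasure [MeasurableSingletonClass α] (f : α → ℝ) (r : ℝ) :
    Integrable f (twoPointMeasure r x y) :=
  .add_measure ((integrable_dirac enorm_lt_top).smul_measure ENNReal.ofReal_ne_top)
    ((integrable_dirac enorm_lt_top).smul_measure ENNReal.ofReal_ne_top)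

theorem integral_twoPointMeasure [MeasurableSingletonClass α] (f : α → ℝ) {r : ℝ}
    (hr0 : 0 ≤ r) (hr1 : r ≤ 1) :
    ∫ a, f a ∂twoPointMeasure r x y = r * f x + (1 - r) * f y := by
  have hdirac (z : α) : Integrable f (Measure.dirac z) := integrable_dirac enorm_lt_top
  rw [twoPointMeasure, integral_add_measure ((hdirac x).smul_measure ENNReal.ofReal_ne_top)
      ((hdirac y).smul_measure ENNReal.ofReal_ne_top), integral_smul_measure,
    integral_smul_measure, integral_dirac, integral_dirac, ENNReal.toReal_ofReal hr0,
    ENNReal.toReal_ofReal (sub_nonneg.mpr hr1), smul_eq_mul, smul_eq_mul]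

theorem integral_mem_Icc_zero_one (μ : Measure β) [IsProbabilityMeasure μ] {f : β → ℝ}
    (hf : ∀ b, f b ∈ Icc 0 1) : ∫ b, f b ∂μ ∈ Icc 0 1 := by
  have hnorm : ∀ b, ‖f b‖ ≤ 1 := fun b => by
    rw [Real.norm_eq_abs, abs_le]; constructor <;> linarith [(hf b).1, (hf b).2]
  have := norm_integral_le_of_norm_le_const (μ := μ) (.of_forall hnorm)
  rw [probReal_univ, mul_one, Real.norm_eq_abs, abs_le] at this
  exact ⟨integral_nonneg fun b => (hf b).1, this.2⟩

theorem lintegral_twoPointMeasure_apply (μ : Measure β) [IsProbabilityMeasure μ] {f : β → ℝ}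
    (hf : Measurable f) (hf01 : ∀ b, f b ∈ Icc 0 1) (E : Set α) :
    ∫⁻ b, twoPointMeasure (f b) x y E ∂μ = twoPointMeasure (∫ b, f b ∂μ) x y E := by
  have hfi : Integrable f μ := .of_mem_Icc 0 1 hf.aemeasurable (.of_forall hf01)
  have hpos : ∫⁻ b, ENNReal.ofReal (f b) ∂μ = ENNReal.ofReal (∫ b, f b ∂μ) :=
    (ofReal_integral_eq_lintegral_ofReal hfi (.of_forall fun b => (hf01 b).1)).symm
  have hneg : ∫⁻ b, ENNReal.ofReal (1 - f b) ∂μ = ENNReal.ofReal (1 - ∫ b, f b ∂μ) := by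
    rw [← ofReal_integral_eq_lintegral_ofReal (f := fun b => 1 - f b)
      ((integrable_const 1).sub hfi) (.of_forall fun b => sub_nonneg.mpr (hf01 b).2),
      integral_sub (integrable_const 1) hfi, integral_const, probReal_univ, one_smul]
  simp only [twoPointMeasure, Measure.add_apply, Measure.smul_apply, smul_eq_mul]
  rw [lintegral_add_left (hf.ennreal_ofReal.mul_const _), lintegral_mul_const _ hf.ennreal_ofReal,
    lintegral_mul_const _ (hf.const_sub 1).ennreal_ofReal, hpos, hneg]

theorem map_fst_eq_twoPointMeasure {γ : Type*} [MeasurableSpace γ] {ν : Measure (α × γ)}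
    (μ : Measure β) [IsProbabilityMeasure μ] {f : β → ℝ}
    (hf : Measurable f) (hf01 : ∀ b, f b ∈ Icc 0 1)
    (hν : ∀ E, MeasurableSet E → ν (E ×ˢ univ) = ∫⁻ b, twoPointMeasure (f b) x y E ∂μ) :
    ν.map Prod.fst = twoPointMeasure (∫ b, f b ∂μ) x y := by
  ext E hE
  rw [Measure.map_apply measurable_fst hE, ← prod_univ, hν E hE,
    lintegral_twoPointMeasure_apply μ hf hf01]

theorem integrable_fst_of_twoPoint_marginal [MeasurableSingletonClass α] {γ : Type*}
    [MeasurableSpace γ] {ν : Measure (α × γ)} (μ : Measure β) [IsProbabilityMeasure μ] {f : β → ℝ}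
    (hf : Measurable f) (hf01 : ∀ b, f b ∈ Icc 0 1)
    (hν : ∀ E, MeasurableSet E → ν (E ×ˢ univ) = ∫⁻ b, twoPointMeasure (f b) x y E ∂μ)
    {g : α → ℝ} (hg : Measurable g) :
    Integrable (fun q => g q.1) ν := by
  have := integrable_twoPointMeasure (x := x) (y := y) g (∫ b, f b ∂μ)
  rw [← map_fst_eq_twoPointMeasure μ hf hf01 hν] at this
  exact (integrable_map_measure hg.aestronglyMeasurable measurable_fst.aemeasurable).mp this

theorem integral_fst_of_twoPoint_marginal [MeasurableSingletonClass α] {γ : Type*}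
    [MeasurableSpace γ] {ν : Measure (α × γ)} (μ : Measure β) [IsProbabilityMeasure μ] {f : β → ℝ}
    (hf : Measurable f) (hf01 : ∀ b, f b ∈ Icc 0 1)
    (hν : ∀ E, MeasurableSet E → ν (E ×ˢ univ) = ∫⁻ b, twoPointMeasure (f b) x y E ∂μ)
    {g : α → ℝ} (hg : Measurable g) :
    ∫ q, g q.1 ∂ν = (∫ b, f b ∂μ) * g x + (1 - ∫ b, f b ∂μ) * g y := by
  rw [← integral_map measurable_fst.aemeasurable hg.aestronglyMeasurable,
    map_fst_eq_twoPointMeasure μ hf hf01 hν,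
    integral_twoPointMeasure g (integral_mem_Icc_zero_one μ hf01).1
      (integral_mem_Icc_zero_one μ hf01).2]

end TwoPoint

theorem hasSum_geometric_mul_sub {r : ℝ} (hr : |r| < 1) {u : ℕ → ℝ} {C : ℝ}
    (hu : ∀ n, |u n| ≤ C) :
    HasSum (fun n => r ^ n * (u n - r * u (n + 1))) (u 0) := by
  have hs : Summable (fun n => r ^ n * u n) :=
    .of_norm_bounded ((summable_geometric_of_lt_one (abs_nonneg r) hr).mul_right C) fun n => by
      rw [Real.norm_eq_abs, abs_mul, abs_pow]
      exact mul_le_mul_of_nonneg_left (hu n) (by positivity)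
  have hshift := (hasSum_nat_add_iff' 1).mpr hs.hasSum
  rw [Finset.sum_range_one, pow_zero, one_mul] at hshift
  have h := hs.hasSum.sub hshift
  rw [sub_sub_cancel] at h
  have hterm : (fun n => r ^ n * u n - r ^ (n + 1) * u (n + 1)) =
      fun n => r ^ n * (u n - r * u (n + 1)) := funext fun n => by ring
  rwa [hterm] at h

theorem discounted_payoff_eq_of_round_payoff {lam γ C : ℝ} (hlam0 : 0 < lam) (hlam1 : lam < 1)
    {F R : ℕ → ℝ} (hF : ∀ t, |F t| ≤ C)
    (hR : ∀ t, R t = F t - lam ^ 2 * F (t + 1) + lam * (1 + lam) * γ) :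
    (1 - lam) * ((-(lam * F 0) + (1 + lam) * γ) + ∑' t : ℕ, lam ^ (2 * t + 1) * R t) = γ := by
  have hlam2 : lam ^ 2 < 1 := by nlinarith
  have hsum : HasSum (fun t : ℕ => lam ^ (2 * t + 1) * R t)
      (lam * F 0 + lam ^ 2 * (1 + lam) * γ * (1 - lam ^ 2)⁻¹) := by
    have h := ((hasSum_geometric_mul_sub (by rwa [abs_of_nonneg (sq_nonneg lam)]) hF).mul_left
      lam).add ((hasSum_geometric_of_lt_one (sq_nonneg lam) hlam2).mul_left
        (lam ^ 2 * (1 + lam) * γ))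
    have hterm : (fun t : ℕ => lam * ((lam ^ 2) ^ t * (F t - lam ^ 2 * F (t + 1))) +
        lam ^ 2 * (1 + lam) * γ * (lam ^ 2) ^ t) = fun t : ℕ => lam ^ (2 * t + 1) * R t := by
      funext t; rw [hR, pow_succ lam (2 * t), pow_mul]; ring
    rwa [hterm] at h
  rw [hsum.tsum_eq]
  have hne : 1 - lam ^ 2 ≠ 0 := by linarith
  field_simp
  ring

section ReactiveTwoPoint

variable {A : Type*} [MeasurableSpace A] [MeasurableSingletonClass A]

theorem discounted_payoff_eq_of_reactive_twoPoint {B C p : A → ℝ} {x₁ x₀ : A} {lam γ : ℝ}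
    (hB : Measurable B) (hB₀ : B x₀ = 0) (hp : Measurable p) (hp01 : ∀ a, p a ∈ Icc 0 1)
    (hlam0 : 0 < lam) (hlam1 : lam < 1)
    (hC : ∀ a, C a = lam * B x₁ * p a - (1 + lam) * γ)
    (σY0 : Measure A) [IsProbabilityMeasure σY0] (ν : ℕ → Measure (A × A))
    [∀ t, IsProbabilityMeasure (ν t)]
    (hν0 : ∀ E, MeasurableSet E → ν 0 (E ×ˢ univ) = ∫⁻ y, twoPointMeasure (p y) x₁ x₀ E ∂σY0)
    (hνS : ∀ t E, MeasurableSet E →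
      ν (t + 1) (E ×ˢ univ) = ∫⁻ q, twoPointMeasure (p q.2) x₁ x₀ E ∂(ν t)) :
    (1 - lam) * ((∫ y, -C y ∂σY0) +
      ∑' t : ℕ, lam ^ (2 * t + 1) * ∫ q, (B q.1 + lam * -C q.2) ∂(ν t)) = γ := by
  obtain rfl : C = fun a => lam * B x₁ * p a - (1 + lam) * γ := funext hC
  have hpS : Measurable fun q : A × A => p q.2 := hp.comp measurable_snd
  have hpS01 (q : A × A) : p q.2 ∈ Icc 0 1 := hp01 q.2
  set F : ℕ → ℝ := fun t => ∫ q, B q.1 ∂(ν t)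
  have hF0 : F 0 = (∫ y, p y ∂σY0) * B x₁ := by
    simpa [hB₀] using integral_fst_of_twoPoint_marginal σY0 hp hp01 hν0 hB
  have hFS (t : ℕ) : F (t + 1) = (∫ q, p q.2 ∂(ν t)) * B x₁ := by
    simpa [hB₀] using integral_fst_of_twoPoint_marginal (ν t) hpS hpS01 (hνS t) hB
  have hBint : ∀ t, Integrable (fun q => B q.1) (ν t)
    | 0 => integrable_fst_of_twoPoint_marginal σY0 hp hp01 hν0 hB
    | t + 1 => integrable_fst_of_twoPoint_marginal (ν t) hpS hpS01 (hνS t) hB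
  have hFbound : ∀ t, |F t| ≤ |B x₁| := by
    have hscaled {r : ℝ} (hr : r ∈ Icc 0 1) : |r * B x₁| ≤ |B x₁| := by
      rw [abs_mul]
      exact mul_le_of_le_one_left (abs_nonneg _) (abs_le.mpr ⟨by linarith [hr.1], hr.2⟩)
    rintro (_ | t)
    · rw [hF0]; exact hscaled (integral_mem_Icc_zero_one σY0 hp01)
    · rw [hFS]; exact hscaled (integral_mem_Icc_zero_one (ν t) hpS01)
  have hcost0 :
      ∫ y, -(lam * B x₁ * p y - (1 + lam) * γ) ∂σY0 = -(lam * F 0) + (1 + lam) * γ := by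
    rw [integral_neg, integral_sub
      ((Integrable.of_mem_Icc 0 1 hp.aemeasurable (.of_forall hp01)).const_mul _)
      (integrable_const _), integral_const_mul, integral_const, hF0]
    simp only [probReal_univ, one_smul]
    ring
  have hround (t : ℕ) : ∫ q, (B q.1 + lam * -(lam * B x₁ * p q.2 - (1 + lam) * γ)) ∂(ν t) =
      F t - lam ^ 2 * F (t + 1) + lam * (1 + lam) * γ := by
    have hpint : Integrable (fun q : A × A => p q.2) (ν t) :=
      .of_mem_Icc 0 1 hpS.aemeasurable (.of_forall hpS01)
    have hpt : (fun q : A × A => B q.1 + lam * -(lam * B x₁ * p q.2 - (1 + lam) * γ)) =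
        fun q => B q.1 + (-(lam ^ 2 * B x₁) * p q.2 + lam * (1 + lam) * γ) := by
      funext q; ring
    have haff : Integrable (fun q : A × A => -(lam ^ 2 * B x₁) * p q.2 + lam * (1 + lam) * γ)
        (ν t) := (hpint.const_mul _).add (integrable_const _)
    rw [hpt, integral_add (hBint t) haff, integral_add (hpint.const_mul _) (integrable_const _),
      integral_const_mul, integral_const, hFS]
    simp only [probReal_univ, one_smul]
    ring
  rw [hcost0]
  exact discounted_payoff_eq_of_round_payoff hlam0 hlam1 hFbound hround

theorem autocratic_identity_of_reactive_twoPoint {B C p : A → ℝ} {x₁ x₀ : A} {lam γ : ℝ}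
    (hB₀ : B x₀ = 0) (hp01 : ∀ a, p a ∈ Icc 0 1) (hlam0 : 0 < lam)
    (hC : ∀ a, C a = lam * B x₁ * p a - (1 + lam) * γ) (x y y0 : A) :
    (B x - γ) + lam * (-C y - γ) + ((1 - lam ^ 2) / lam) * (-C y0 - γ) =
      (B x - γ) - lam ^ 2 * (∫ s, (B s - γ) ∂twoPointMeasure (p y) x₁ x₀)
        - (1 - lam ^ 2) * (∫ s, (B s - γ) ∂twoPointMeasure (p y0) x₁ x₀) := by
  rw [integral_twoPointMeasure _ (hp01 y).1 (hp01 y).2,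
    integral_twoPointMeasure _ (hp01 y0).1 (hp01 y0).2, hB₀, hC y, hC y0]
  field_simp
  ring

end ReactiveTwoPoint

theorem stmt_16_general
    (K : ℝ) (hK : 0 < K) (b c : ℝ → ℝ)
    (hbC : ContinuousOn b (Set.Icc 0 K)) (hcC : ContinuousOn c (Set.Icc 0 K))
    (hcM : MonotoneOn c (Set.Icc 0 K))
    (hb0 : b 0 = 0) (hc0 : c 0 = 0)
    (hcb : ∀ s ∈ Set.Ioc (0 : ℝ) K, c s < b s)
    (lam : ℝ) (hlam0 : 0 < lam) (hlam1 : lam < 1)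
    (γ : ℝ) (hγ0 : 0 ≤ γ) (hγ1 : γ ≤ (lam * b K - c K) / (1 + lam))
    (p : Set.Icc (0 : ℝ) K → ℝ)
    (hp : ∀ y : Set.Icc (0 : ℝ) K,
      p y = (c ↑y + (1 + lam) * γ) / (lam * b K))
    (σX0 : Set.Icc (0 : ℝ) K → Measure (Set.Icc (0 : ℝ) K))
    (hσX0 : ∀ y0 : Set.Icc (0 : ℝ) K, σX0 y0 =
      ENNReal.ofReal (p y0) • Measure.dirac (⟨K, Set.right_mem_Icc.mpr hK.le⟩ : Set.Icc (0 : ℝ) K)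
        + ENNReal.ofReal (1 - p y0) • Measure.dirac (⟨0, Set.left_mem_Icc.mpr hK.le⟩ : Set.Icc (0 : ℝ) K))
    (σX : Set.Icc (0 : ℝ) K × Set.Icc (0 : ℝ) K → Measure (Set.Icc (0 : ℝ) K))
    (hσX : ∀ q : Set.Icc (0 : ℝ) K × Set.Icc (0 : ℝ) K, σX q =
      ENNReal.ofReal (p q.2) • Measure.dirac (⟨K, Set.right_mem_Icc.mpr hK.le⟩ : Set.Icc (0 : ℝ) K)
        + ENNReal.ofReal (1 - p q.2) • Measure.dirac (⟨0, Set.left_mem_Icc.mpr hK.le⟩ : Set.Icc (0 : ℝ) K)) :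
    (∀ y : Set.Icc (0 : ℝ) K, 0 ≤ p y ∧ p y ≤ 1) ∧
    (∀ x y y0 : Set.Icc (0 : ℝ) K,
      (b ↑x - γ) + lam * (-(c ↑y) - γ)
          + ((1 - lam ^ 2) / lam) * (-(c ↑y0) - γ) =
        (b ↑x - γ) - lam ^ 2 * (∫ s, (b ↑s - γ) ∂(σX (x, y)))
          - (1 - lam ^ 2) * (∫ s, (b ↑s - γ) ∂(σX0 y0))) ∧
    (∀ σY0 : Measure (Set.Icc (0 : ℝ) K), IsProbabilityMeasure σY0 →
      ∀ ν : ℕ → Measure (Set.Icc (0 : ℝ) K × Set.Icc (0 : ℝ) K),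
      (∀ t, IsProbabilityMeasure (ν t)) →
      (∀ E : Set (Set.Icc (0 : ℝ) K), MeasurableSet E →
        ν 0 (E ×ˢ Set.univ) = ∫⁻ y0, σX0 y0 E ∂σY0) →
      (∀ (t : ℕ) (E : Set (Set.Icc (0 : ℝ) K)), MeasurableSet E →
        ν (t + 1) (E ×ˢ Set.univ) = ∫⁻ q, σX q E ∂(ν t)) →
      (1 - lam) * ((∫ y0, -(c ↑y0) ∂σY0) + ∑' t : ℕ, lam ^ (2 * t + 1) *
          ∫ q, (b ↑q.1 + lam * (-(c ↑q.2))) ∂(ν t)) = γ) := by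
  set aK : Set.Icc (0 : ℝ) K := ⟨K, Set.right_mem_Icc.mpr hK.le⟩
  set a0 : Set.Icc (0 : ℝ) K := ⟨0, Set.left_mem_Icc.mpr hK.le⟩
  have hσX0' (y0 : Set.Icc (0 : ℝ) K) : σX0 y0 = twoPointMeasure (p y0) aK a0 := hσX0 y0
  have hσX' (q : Set.Icc (0 : ℝ) K × Set.Icc (0 : ℝ) K) : σX q = twoPointMeasure (p q.2) aK a0 :=
    hσX q
  have hc (y : Set.Icc (0 : ℝ) K) : c y ∈ Icc 0 (c K) :=
    ⟨by simpa [a0, hc0] using hcM a0.2 y.2 y.2.1, hcM y.2 aK.2 y.2.2⟩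
  have hbK : 0 < b K := (hc aK).1.trans_lt (hcb K ⟨hK, le_rfl⟩)
  have hp01 (y : Set.Icc (0 : ℝ) K) : p y ∈ Icc 0 1 := by
    rw [le_div_iff₀' (by linarith)] at hγ1
    rw [hp, mem_Icc, div_le_one (by positivity)]
    exact ⟨by have := (hc y).1; positivity, by linarith [(hc y).2]⟩
  have hcost (y : Set.Icc (0 : ℝ) K) : c y = lam * b K * p y - (1 + lam) * γ := by
    rw [hp]; field_simp; ring
  refine ⟨hp01, fun x y y0 => ?_, fun σY0 _ ν _ hν0 hνS => ?_⟩
  · rw [hσX', hσX0']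
    exact autocratic_identity_of_reactive_twoPoint (B := fun s : Set.Icc (0 : ℝ) K => b s)
      (x₁ := aK) hb0 hp01 hlam0 hcost x y y0
  · have hpm : Measurable p := by
      rw [funext hp]
      exact (hcC.domRestrict.measurable.add_const _).div_const _
    exact discounted_payoff_eq_of_reactive_twoPoint (x₁ := aK) (x₀ := a0)
      hbC.domRestrict.measurable hb0 hpm hp01 hlam0 hlam1 hcost σY0 ν (fun E hE => by simp only [hν0 E hE, hσX0'])
      (fun t E hE => by simp only [hνS t E hE, hσX'])

/-- Reactive two-point equalizer strategies in the strictly-alternating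
continuous Donation Game in which `Y` moves first: for `λ ≥ c(K)/b(K)` and
`0 ≤ γ ≤ (λ b(K) − c(K))/(1+λ)`, the reaction probabilities `p(y)` lie in
`[0,1]`, the strategy `σX0[y₀] = p(y₀) δ_K + (1−p(y₀)) δ_0`,
`σX[x,y] = p(y) δ_K + (1−p(y)) δ_0` satisfies the autocratic identity with
`ψ(s) = b(s) − γ`, and consequently it unilaterally enforces `π_Y = γ` for
every strategy of player `Y`. -/
theorem stmt_16
    (K : ℝ) (hK : 0 < K) (b c : ℝ → ℝ)
    (hbC : ContinuousOn b (Set.Icc 0 K)) (hcC : ContinuousOn c (Set.Icc 0 K))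
    (hbM : MonotoneOn b (Set.Icc 0 K)) (hcM : MonotoneOn c (Set.Icc 0 K))
    (hb0 : b 0 = 0) (hc0 : c 0 = 0)
    (hcb : ∀ s ∈ Set.Ioc (0 : ℝ) K, c s < b s)
    (hcpos : ∀ s ∈ Set.Ioc (0 : ℝ) K, 0 < c s)
    (lam : ℝ) (hlam0 : 0 < lam) (hlam1 : lam < 1)
    (hlamge : c K / b K ≤ lam)
    (γ : ℝ) (hγ0 : 0 ≤ γ) (hγ1 : γ ≤ (lam * b K - c K) / (1 + lam))
    (p : Set.Icc (0 : ℝ) K → ℝ)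
    (hp : ∀ y : Set.Icc (0 : ℝ) K,
      p y = (c ↑y + (1 + lam) * γ) / (lam * b K))
    (σX0 : Set.Icc (0 : ℝ) K → Measure (Set.Icc (0 : ℝ) K))
    (hσX0 : ∀ y0 : Set.Icc (0 : ℝ) K, σX0 y0 =
      ENNReal.ofReal (p y0) • Measure.dirac (⟨K, Set.right_mem_Icc.mpr hK.le⟩ : Set.Icc (0 : ℝ) K)
        + ENNReal.ofReal (1 - p y0) • Measure.dirac (⟨0, Set.left_mem_Icc.mpr hK.le⟩ : Set.Icc (0 : ℝ) K))
    (σX : Set.Icc (0 : ℝ) K × Set.Icc (0 : ℝ) K → Measure (Set.Icc (0 : ℝ) K))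
    (hσX : ∀ q : Set.Icc (0 : ℝ) K × Set.Icc (0 : ℝ) K, σX q =
      ENNReal.ofReal (p q.2) • Measure.dirac (⟨K, Set.right_mem_Icc.mpr hK.le⟩ : Set.Icc (0 : ℝ) K)
        + ENNReal.ofReal (1 - p q.2) • Measure.dirac (⟨0, Set.left_mem_Icc.mpr hK.le⟩ : Set.Icc (0 : ℝ) K)) :
    (∀ y : Set.Icc (0 : ℝ) K, 0 ≤ p y ∧ p y ≤ 1) ∧
    (∀ x y y0 : Set.Icc (0 : ℝ) K,
      (b ↑x - γ) + lam * (-(c ↑y) - γ)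
          + ((1 - lam ^ 2) / lam) * (-(c ↑y0) - γ) =
        (b ↑x - γ) - lam ^ 2 * (∫ s, (b ↑s - γ) ∂(σX (x, y)))
          - (1 - lam ^ 2) * (∫ s, (b ↑s - γ) ∂(σX0 y0))) ∧
    (∀ σY0 : Measure (Set.Icc (0 : ℝ) K), IsProbabilityMeasure σY0 →
      ∀ ν : ℕ → Measure (Set.Icc (0 : ℝ) K × Set.Icc (0 : ℝ) K),
      (∀ t, IsProbabilityMeasure (ν t)) →
      (∀ E : Set (Set.Icc (0 : ℝ) K), MeasurableSet E →
        ν 0 (E ×ˢ Set.univ) = ∫⁻ y0, σX0 y0 E ∂σY0) →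
      (∀ (t : ℕ) (E : Set (Set.Icc (0 : ℝ) K)), MeasurableSet E →
        ν (t + 1) (E ×ˢ Set.univ) = ∫⁻ q, σX q E ∂(ν t)) →
      (1 - lam) * ((∫ y0, -(c ↑y0) ∂σY0) + ∑' t : ℕ, lam ^ (2 * t + 1) *
          ∫ q, (b ↑q.1 + lam * (-(c ↑q.2))) ∂(ν t)) = γ) :=
  stmt_16_general K hK b c hbC hcC hcM hb0 hc0 hcb lam hlam0 hlam1 γ hγ0 hγ1 p hp σX0 hσX0 σX hσX
end

section
/- Let 0 < λ < 1, 0 < ω_X ≤ 1, χ ≥ 1, and suppose λ ≥ (1/ω_X) · (b(K) + χ c(K)) / ((χ+1)(b(K) + c(K))). Let κ_X^{KK} = (1−ω_X) b(K) − ω_X c(K) and κ_Y^{KK} = ω_X b(K) − (1−ω_X) c(K), and let κ_X, κ_Y ∈ ℝ satisfy κ_X ≤ χκ_Y ≤ κ_X + (χκ_Y^{KK} − κ_X^{KK}); set γ := χκ_Y − κ_X. Suppose p_0 ∈ [0,1] satisfies max{ (b(K)+χ c(K)+γ)/((1−λ) ω_X (χ+1)(b(K)+c(K))) − λ/(1−λ),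 0 } ≤ p_0 ≤ min{ γ/((1−λ) ω_X (χ+1)(b(K)+c(K))), 1 }, and define p(s) := (b(s)+χ c(s)+γ)/(λ ω_X (χ+1)(b(K)+c(K))) − ((1−λ)/λ) p_0 for s ∈ [0,K]. Then 0 ≤ p(s) ≤ 1 for all s ∈ [0,K], and the two-point strategy σ_X^0 = p_0 δ_K + (1−p_0) δ_0, σ_X^X[x] = p(x) δ_K + (1−p(x)) δ_0, σ_X^Y[y] = p(y) δ_K + (1−p(y)) δ_0 satisfies, with ψ(s) := −(χ+1)(b(s)+c(s)), both identities −c(x) − χ b(x) + γ = ψ(x) − λ ω_X ∫ ψ dσ_X^X[x] − (1−λ) ω_X ∫ ψ dσ_X^0 and b(y) + χ c(y) + γ = − λ ω_X ∫ ψ dσ_X^Y[y] − (1−λ) ω_X ∫ ψ dσ_X^0 for all x, y ∈ [0,K]. Consequently, in the randomly-alternating continuous Donation Game, this strategy unilaterally enforces π_X − κ_X = χ(π_Y − κ_Y). -/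
open MeasureTheory ProbabilityTheory Set

/-!
Put `ψ s = -(χ + 1) * (b s + c s)` and let `a t` be the integral of `Sum.elim ψ 0` against the
law of the round-`t` move. The transition law of the play gives `a 0 = ωX * ∫ ψ ∂σ⁰` and
`a (t + 1) = ωX * ∫ (∫ ψ ∂σ[s]) ∂ν t`, so integrating the two autocratic identities against the
round-`t` law gives `𝔼ₜ[π_X - χ π_Y] + γ = a t - λ a (t + 1) - (1 - λ) ωX ∫ ψ ∂σ⁰`. The
discounted sum telescopes to `(1 - λ) a 0`, which cancels the constant term.

For the two-point strategy, `ψ 0 = 0` makes `∫ ψ ∂σ` equal to the weight on `K` times `ψ K`, so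
both identities reduce to the defining formula of `p`; monotonicity of `b`, `c` and the bounds on
`p₀` put `p` in `[0, 1]`.
-/

theorem integral_sumElim_zero {S T : Type*} [MeasurableSpace S] [MeasurableSpace T]
    {ν : Measure (S ⊕ T)} {μ : Measure S}
    (h : ∀ E, MeasurableSet E → ν (Sum.inl '' E) = μ E) (ψ : S → ℝ) :
    ∫ s, Sum.elim ψ 0 s ∂ν = ∫ s, ψ s ∂μ := by
  have hrestrict : ν.restrict (range Sum.inl) = μ.map Sum.inl := by
    ext A hA
    rw [Measure.restrict_apply hA, Measure.map_apply measurable_inl hA,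
      ← image_preimage_eq_inter_range, h _ (measurable_inl hA)]
  have hemb : MeasurableEmbedding (Sum.inl : S → S ⊕ T) :=
    ⟨Sum.inl_injective, measurable_inl, fun _ hE => hE.inl_image⟩
  rw [← setIntegral_eq_integral_of_forall_compl_eq_zero (s := range Sum.inl), hrestrict,
    hemb.integral_map]
  · rfl
  · rintro (x | y) hs
    · exact absurd ⟨x, rfl⟩ hs
    · rfl

theorem integral_measure_comp {α β : Type*} [MeasurableSpace α] [MeasurableSpace β]
    (κ : Kernel α β) (ν : Measure α) {f : β → ℝ} (hf : Integrable f (κ ∘ₘ ν)) :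
    ∫ y, f y ∂(κ ∘ₘ ν) = ∫ x, ∫ y, f y ∂κ x ∂ν := by
  rw [Measure.comp_eq_comp_const_apply] at hf ⊢
  exact Kernel.integral_comp hf

theorem integrable_integral_of_integrable_measure_comp {α β : Type*} [MeasurableSpace α]
    [MeasurableSpace β] (κ : Kernel α β) (ν : Measure α) {f : β → ℝ}
    (hf : Integrable f (κ ∘ₘ ν)) : Integrable (fun x => ∫ y, f y ∂κ x) ν := by
  rw [Measure.comp_eq_comp_const_apply] at hf
  exact hf.integral_comp

theorem integral_sumElim_zero_of_transition {α S T : Type*} [MeasurableSpace α]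
    [MeasurableSpace S] [MeasurableSpace T] {κ : Kernel α S} {μ : Measure α}
    {ν : Measure (S ⊕ T)} {ω : ℝ} (hω : 0 ≤ ω)
    (h : ∀ E, MeasurableSet E → ν (Sum.inl '' E) = ENNReal.ofReal ω * ∫⁻ a, κ a E ∂μ)
    {ψ : S → ℝ} (hψ : Integrable ψ (κ ∘ₘ μ)) :
    ∫ s, Sum.elim ψ 0 s ∂ν = ω * ∫ a, ∫ s, ψ s ∂κ a ∂μ := by
  have hν : ∀ E, MeasurableSet E → ν (Sum.inl '' E) = (ENNReal.ofReal ω • (κ ∘ₘ μ)) E := by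
    intro E hE
    rw [h E hE, Measure.smul_apply, Measure.bind_apply hE κ.aemeasurable, smul_eq_mul]
  rw [integral_sumElim_zero hν, integral_smul_measure, ENNReal.toReal_ofReal hω, smul_eq_mul,
    integral_measure_comp κ μ hψ]

theorem norm_integral_le_of_forall_norm_le {α : Type*} [MeasurableSpace α] {μ : Measure α}
    [IsProbabilityMeasure μ] {f : α → ℝ} {C : ℝ} (h : ∀ x, ‖f x‖ ≤ C) :
    ‖∫ x, f x ∂μ‖ ≤ C := by
  simpa using norm_integral_le_of_norm_le_const (μ := μ) (ae_of_all _ h)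

theorem integral_sub_mul_add_const_eq {T : Type*} [MeasurableSpace T] {μ : Measure T}
    [IsProbabilityMeasure μ] {u v f g : T → ℝ} (hu : Integrable u μ) (hv : Integrable v μ)
    (hf : Integrable f μ) (hg : Integrable g μ) {a b c d : ℝ}
    (h : ∀ s, u s - a * v s + b = f s - c * g s - d) :
    ∫ s, u s ∂μ - a * ∫ s, v s ∂μ + b = ∫ s, f s ∂μ - c * ∫ s, g s ∂μ - d := by
  have h := integral_congr_ae (μ := μ) (ae_of_all _ h)
  rw [integral_add (f := fun s => u s - a * v s) (hu.sub (hv.const_mul a)) (integrable_const b),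
    integral_sub hu (hv.const_mul a), integral_const_mul,
    integral_sub (f := fun s => f s - c * g s) (hf.sub (hg.const_mul c)) (integrable_const d),
    integral_sub hf (hg.const_mul c), integral_const_mul, integral_const, integral_const] at h
  simpa only [probReal_univ, one_smul] using h

theorem integral_smul_dirac_add_smul_dirac {S : Type*} [MeasurableSpace S]
    [MeasurableSingletonClass S] (f : S → ℝ) {a b : ℝ} (ha : 0 ≤ a) (hb : 0 ≤ b) (x y : S) :
    ∫ s, f s ∂(ENNReal.ofReal a • Measure.dirac x + ENNReal.ofReal b • Measure.dirac y) =
      a * f x + b * f y := by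
  have hdirac : ∀ z : S, Integrable f (Measure.dirac z) := fun z =>
    (integrable_const (f z)).congr (ae_eq_dirac f).symm
  rw [integral_add_measure ((hdirac x).smul_measure ENNReal.ofReal_ne_top)
    ((hdirac y).smul_measure ENNReal.ofReal_ne_top), integral_smul_measure, integral_smul_measure,
    integral_dirac, integral_dirac, ENNReal.toReal_ofReal ha, ENNReal.toReal_ofReal hb,
    smul_eq_mul, smul_eq_mul]

theorem isProbabilityMeasure_smul_dirac_add_smul_dirac {S : Type*} [MeasurableSpace S] {q : ℝ}
    (hq : q ∈ Icc 0 1) (x y : S) :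
    IsProbabilityMeasure
      (ENNReal.ofReal q • Measure.dirac x + ENNReal.ofReal (1 - q) • Measure.dirac y) := by
  constructor
  simp [← ENNReal.ofReal_add hq.1 (sub_nonneg.2 hq.2)]

theorem measurable_smul_dirac_add_smul_dirac {α S : Type*} [MeasurableSpace α]
    [MeasurableSpace S] {q : α → ℝ} (hq : Measurable q) (x y : S) :
    Measurable fun a =>
      ENNReal.ofReal (q a) • Measure.dirac x + ENNReal.ofReal (1 - q a) • Measure.dirac y := by
  refine Measure.measurable_of_measurable_coe _ fun E hE => ?_
  simp only [Measure.add_apply, Measure.smul_apply, smul_eq_mul]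
  fun_prop

theorem summable_geometric_mul_of_bounded {lam : ℝ} (h0 : 0 ≤ lam) (h1 : lam < 1) {a : ℕ → ℝ}
    {M : ℝ} (ha : ∀ t, ‖a t‖ ≤ M) : Summable fun t => lam ^ t * a t := by
  refine Summable.of_norm_bounded ((summable_geometric_of_lt_one h0 h1).mul_right M) fun t => ?_
  rw [norm_mul, norm_pow, Real.norm_of_nonneg h0]
  exact mul_le_mul_of_nonneg_left (ha t) (pow_nonneg h0 t)

theorem hasSum_geometric_mul_sub_mul_succ {lam : ℝ} (h0 : 0 ≤ lam) (h1 : lam < 1) {a : ℕ → ℝ}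
    {M : ℝ} (ha : ∀ t, ‖a t‖ ≤ M) :
    HasSum (fun t => lam ^ t * (a t - lam * a (t + 1))) (a 0) := by
  have hs := summable_geometric_mul_of_bounded h0 h1 ha
  have h := hs.hasSum.sub ((summable_nat_add_iff 1).mpr hs).hasSum
  rw [hs.tsum_eq_zero_add, add_sub_cancel_right, pow_zero, one_mul] at h
  simpa only [mul_sub, ← mul_assoc, ← pow_succ] using h

theorem tsum_geometric_mul_sub_mul_add_of_telescoping {lam χ γ C : ℝ} (h0 : 0 ≤ lam) (h1 : lam < 1)
    {x y a : ℕ → ℝ} {Mx My Ma : ℝ} (hx : ∀ t, ‖x t‖ ≤ Mx) (hy : ∀ t, ‖y t‖ ≤ My)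
    (ha : ∀ t, ‖a t‖ ≤ Ma) (h : ∀ t, x t - χ * y t + γ = a t - lam * a (t + 1) - C) :
    (1 - lam) * ∑' t, lam ^ t * x t - χ * ((1 - lam) * ∑' t, lam ^ t * y t) + γ =
      (1 - lam) * a 0 - C := by
  have hgeom := hasSum_geometric_of_lt_one h0 h1
  have hxy := ((summable_geometric_mul_of_bounded h0 h1 hx).hasSum.sub
    ((summable_geometric_mul_of_bounded h0 h1 hy).hasSum.mul_left χ)).add (hgeom.mul_left γ)
  have heq := hxy.unique <| by
    convert (hasSum_geometric_mul_sub_mul_succ h0 h1 ha).sub (hgeom.mul_left C) using 1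
    ext t
    linear_combination lam ^ t * h t
  have : 1 - lam ≠ 0 := by linarith
  field_simp at heq
  linear_combination heq

noncomputable def discountedPayoff {T : Type*} [MeasurableSpace T] (lam : ℝ)
    (ν : ℕ → Measure T) (f : T → ℝ) : ℝ :=
  (1 - lam) * ∑' t, lam ^ t * ∫ s, f s ∂ν t

/- `ν t` is the law of the move in round `t`: `Sum.inl x` means that X moved and invested `x`,
`Sum.inr y` that Y invested `y`; X's strategy is `σ0` in round `0` and the kernel `κ` afterwards. -/
theorem discountedPayoff_sub_mul_add_eq_zero {S : Type*} [MeasurableSpace S]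
    {lam ωX χ γ : ℝ} (hlam0 : 0 ≤ lam) (hlam1 : lam < 1) (hω : 0 ≤ ωX)
    (σ0 : Measure S) (κ : Kernel (S ⊕ S) S) [IsMarkovKernel κ]
    {ψ : S → ℝ} (hψ : Measurable ψ) (hψC : ∃ C, ∀ s, ‖ψ s‖ ≤ C)
    {u v : S ⊕ S → ℝ} (hu : Measurable u) (huC : ∃ C, ∀ s, ‖u s‖ ≤ C)
    (hv : Measurable v) (hvC : ∃ C, ∀ s, ‖v s‖ ≤ C)
    (hX : ∀ x, u (.inl x) - χ * v (.inl x) + γ =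
      ψ x - lam * ωX * ∫ s, ψ s ∂κ (.inl x) - (1 - lam) * ωX * ∫ s, ψ s ∂σ0)
    (hY : ∀ y, u (.inr y) - χ * v (.inr y) + γ =
      -(lam * ωX * ∫ s, ψ s ∂κ (.inr y)) - (1 - lam) * ωX * ∫ s, ψ s ∂σ0)
    (ν : ℕ → Measure (S ⊕ S)) [∀ t, IsProbabilityMeasure (ν t)]
    (h0 : ∀ E, MeasurableSet E → ν 0 (Sum.inl '' E) = ENNReal.ofReal ωX * σ0 E)
    (hsucc : ∀ t E, MeasurableSet E →
      ν (t + 1) (Sum.inl '' E) = ENNReal.ofReal ωX * ∫⁻ s, κ s E ∂ν t) :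
    discountedPayoff lam ν u - χ * discountedPayoff lam ν v + γ = 0 := by
  obtain ⟨Cψ, hCψ⟩ := hψC
  obtain ⟨Cu, hCu⟩ := huC
  obtain ⟨Cv, hCv⟩ := hvC
  set C := (1 - lam) * ωX * ∫ s, ψ s ∂σ0
  set Ψ : S ⊕ S → ℝ := Sum.elim ψ 0
  have hΨC : ∀ s, ‖Ψ s‖ ≤ max Cψ 0 := by
    rintro (x | y)
    · exact (hCψ x).trans (le_max_left _ _)
    · simp [Ψ]
  have hψint : ∀ t, Integrable ψ (κ ∘ₘ ν t) :=
    fun t => .of_bound hψ.aestronglyMeasurable Cψ (ae_of_all _ hCψ)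
  have hΨ0 : ∫ s, Ψ s ∂ν 0 = ωX * ∫ s, ψ s ∂σ0 := by
    rw [integral_sumElim_zero (μ := ENNReal.ofReal ωX • σ0) h0, integral_smul_measure,
      ENNReal.toReal_ofReal hω, smul_eq_mul]
  have hpoint : ∀ s, u s - χ * v s + γ = Ψ s - lam * ωX * (∫ y, ψ y ∂κ s) - C := by
    rintro (x | y)
    · exact hX x
    · rw [hY y]; simp only [Ψ, Sum.elim_inr, Pi.zero_apply]; ring
  have hround : ∀ t, (∫ s, u s ∂ν t) - χ * (∫ s, v s ∂ν t) + γ =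
      ∫ s, Ψ s ∂ν t - lam * ∫ s, Ψ s ∂ν (t + 1) - C := by
    intro t
    rw [integral_sub_mul_add_const_eq (f := Ψ)
      (.of_bound hu.aestronglyMeasurable Cu (ae_of_all _ hCu))
      (.of_bound hv.aestronglyMeasurable Cv (ae_of_all _ hCv))
      (.of_bound (hψ.sumElim measurable_const).aestronglyMeasurable _ (ae_of_all _ hΨC))
      (integrable_integral_of_integrable_measure_comp κ _ (hψint t)) hpoint,
      integral_sumElim_zero_of_transition hω (hsucc t) (hψint t)]
    ring
  have := tsum_geometric_mul_sub_mul_add_of_telescoping hlam0 hlam1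
    (fun t => norm_integral_le_of_forall_norm_le (μ := ν t) hCu)
    (fun t => norm_integral_le_of_forall_norm_le (μ := ν t) hCv)
    (fun t => norm_integral_le_of_forall_norm_le (μ := ν t) hΨC) hround
  unfold discountedPayoff
  rw [this, hΨ0]
  ring

theorem donation_discountedPayoff_sub_mul_add_eq_zero {S : Type*} [TopologicalSpace S]
    [CompactSpace S] [MeasurableSpace S] [OpensMeasurableSpace S] {b c : S → ℝ}
    (hb : Continuous b) (hc : Continuous c) {lam ωX χ γ : ℝ} (hlam0 : 0 ≤ lam) (hlam1 : lam < 1)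
    (hω : 0 ≤ ωX) (σ0 : Measure S) {σ : S ⊕ S → Measure S} (hσ : Measurable σ)
    (hσ1 : ∀ s, IsProbabilityMeasure (σ s))
    (hX : ∀ x, -(c x) - χ * b x + γ =
      -(χ + 1) * (b x + c x) - lam * ωX * (∫ s, -(χ + 1) * (b s + c s) ∂σ (.inl x))
        - (1 - lam) * ωX * ∫ s, -(χ + 1) * (b s + c s) ∂σ0)
    (hY : ∀ y, b y + χ * c y + γ =
      -(lam * ωX * ∫ s, -(χ + 1) * (b s + c s) ∂σ (.inr y))
        - (1 - lam) * ωX * ∫ s, -(χ + 1) * (b s + c s) ∂σ0)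
    (ν : ℕ → Measure (S ⊕ S)) [∀ t, IsProbabilityMeasure (ν t)]
    (h0 : ∀ E, MeasurableSet E → ν 0 (Sum.inl '' E) = ENNReal.ofReal ωX * σ0 E)
    (hsucc : ∀ t E, MeasurableSet E →
      ν (t + 1) (Sum.inl '' E) = ENNReal.ofReal ωX * ∫⁻ s, σ s E ∂ν t) :
    discountedPayoff lam ν (Sum.elim (fun x => -(c x)) b)
      - χ * discountedPayoff lam ν (Sum.elim b fun y => -(c y)) + γ = 0 := by
  let κ : Kernel (S ⊕ S) S := ⟨σ, hσ⟩
  have : IsMarkovKernel κ := ⟨hσ1⟩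
  have hψ : Continuous fun s => -(χ + 1) * (b s + c s) := continuous_const.mul (hb.add hc)
  have hu : Continuous (Sum.elim (fun x => -(c x)) b) := hc.neg.sumElim hb
  have hv : Continuous (Sum.elim b fun y => -(c y)) := hb.sumElim hc.neg
  exact discountedPayoff_sub_mul_add_eq_zero hlam0 hlam1 hω σ0 κ
    (u := Sum.elim (fun x => -(c x)) b) (v := Sum.elim b fun y => -(c y)) hψ.measurable
    (hψ.bounded_above_of_compact_support (.of_compactSpace _))
    (hc.measurable.neg.sumElim hb.measurable)
    (hu.bounded_above_of_compact_support (.of_compactSpace _))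
    (hb.measurable.sumElim hc.measurable.neg)
    (hv.bounded_above_of_compact_support (.of_compactSpace _))
    hX (fun y => by simp only [Sum.elim_inr]; linear_combination hY y) ν h0 hsucc

theorem donation_reaction_mem_Icc {K lam ωX χ γ p0 : ℝ} {b c : ℝ → ℝ}
    (hbM : MonotoneOn b (Icc 0 K)) (hcM : MonotoneOn c (Icc 0 K)) (hb0 : b 0 = 0) (hc0 : c 0 = 0)
    (hcK : 0 < c K) (hlam0 : 0 < lam) (hlam1 : lam < 1) (hω0 : 0 < ωX) (hχ : 0 ≤ χ)
    (hp0lb : (b K + χ * c K + γ) / ((1 - lam) * ωX * (χ + 1) * (b K + c K)) - lam / (1 - lam)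
      ≤ p0)
    (hp0ub : p0 ≤ γ / ((1 - lam) * ωX * (χ + 1) * (b K + c K))) {s : ℝ} (hs : s ∈ Icc 0 K) :
    (b s + χ * c s + γ) / (lam * ωX * (χ + 1) * (b K + c K)) - (1 - lam) / lam * p0 ∈ Icc 0 1 := by
  have h0 : (0 : ℝ) ∈ Icc 0 K := ⟨le_rfl, hs.1.trans hs.2⟩
  have hK : K ∈ Icc 0 K := ⟨hs.1.trans hs.2, le_rfl⟩
  have hbs : 0 ≤ b s := hb0 ▸ hbM h0 hs hs.1
  have hcs : 0 ≤ c s := hc0 ▸ hcM h0 hs hs.1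
  have hbsK : b s ≤ b K := hbM hs hK hs.2
  have hcsK : c s ≤ c K := hcM hs hK hs.2
  have hbcK : 0 < b K + c K := by linarith [hb0 ▸ hbM h0 hK hK.1]
  have hχ1 : 0 < χ + 1 := by linarith
  have hE : 0 < (1 - lam) * ωX * (χ + 1) * (b K + c K) :=
    mul_pos (mul_pos (mul_pos (by linarith) hω0) hχ1) hbcK
  have hL : 0 < lam * ωX * (χ + 1) * (b K + c K) :=
    mul_pos (mul_pos (mul_pos hlam0 hω0) hχ1) hbcK
  rw [le_div_iff₀ hE] at hp0ub
  rw [sub_le_iff_le_add, div_le_iff₀ hE] at hp0lb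
  have hL_eq : lam / (1 - lam) * ((1 - lam) * ωX * (χ + 1) * (b K + c K)) =
      lam * ωX * (χ + 1) * (b K + c K) := by
    field_simp [show 1 - lam ≠ 0 by linarith]
  have hp_eq : (b s + χ * c s + γ) / (lam * ωX * (χ + 1) * (b K + c K)) - (1 - lam) / lam * p0 =
      (b s + χ * c s + γ - p0 * ((1 - lam) * ωX * (χ + 1) * (b K + c K))) /
        (lam * ωX * (χ + 1) * (b K + c K)) := by
    field_simp
  rw [add_mul, hL_eq] at hp0lb
  rw [hp_eq, mem_Icc, le_div_iff₀ hL, div_le_iff₀ hL]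
  constructor
  · linarith [mul_nonneg hχ hcs]
  · linarith [mul_le_mul_of_nonneg_left hcsK hχ]

theorem twoPoint_autocratic_identities {S : Type*} [MeasurableSpace S]
    [MeasurableSingletonClass S] {b c : S → ℝ} {x₁ x₀ : S} (hb0 : b x₀ = 0) (hc0 : c x₀ = 0)
    {lam ωX χ γ p0 : ℝ} {p : S → ℝ}
    (hLp : ∀ s, lam * ωX * ((χ + 1) * (b x₁ + c x₁)) * p s =
      b s + χ * c s + γ - (1 - lam) * ωX * ((χ + 1) * (b x₁ + c x₁)) * p0)
    (hp01 : ∀ s, p s ∈ Icc 0 1) (hp0 : p0 ∈ Icc 0 1) {σX0 : Measure S}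
    {σX : S ⊕ S → Measure S}
    (hσX0 : σX0 = ENNReal.ofReal p0 • Measure.dirac x₁ + ENNReal.ofReal (1 - p0) • Measure.dirac x₀)
    (hσXs : ∀ s, σX s = ENNReal.ofReal (p (Sum.elim id id s)) • Measure.dirac x₁
      + ENNReal.ofReal (1 - p (Sum.elim id id s)) • Measure.dirac x₀) :
    (∀ x, -(c x) - χ * b x + γ =
      -(χ + 1) * (b x + c x) - lam * ωX * (∫ s, -(χ + 1) * (b s + c s) ∂σX (.inl x))
        - (1 - lam) * ωX * ∫ s, -(χ + 1) * (b s + c s) ∂σX0) ∧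
    (∀ y, b y + χ * c y + γ =
      -(lam * ωX * ∫ s, -(χ + 1) * (b s + c s) ∂σX (.inr y))
        - (1 - lam) * ωX * ∫ s, -(χ + 1) * (b s + c s) ∂σX0) := by
  have hψ : ∀ q ∈ Icc (0 : ℝ) 1, ∫ s, -(χ + 1) * (b s + c s)
      ∂(ENNReal.ofReal q • Measure.dirac x₁ + ENNReal.ofReal (1 - q) • Measure.dirac x₀) =
        -(q * ((χ + 1) * (b x₁ + c x₁))) := by
    intro q hq
    rw [integral_smul_dirac_add_smul_dirac _ hq.1 (sub_nonneg.2 hq.2), hb0, hc0]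
    ring
  constructor
  · intro x
    rw [hσXs, hσX0, Sum.elim_inl, id, hψ _ (hp01 x), hψ _ hp0]
    linear_combination -hLp x
  · intro y
    rw [hσXs, hσX0, Sum.elim_inr, id, hψ _ (hp01 y), hψ _ hp0]
    linear_combination -hLp y

theorem stmt_17_general
    (K : ℝ) (hK : 0 < K) (b c : ℝ → ℝ)
    (hbC : ContinuousOn b (Set.Icc 0 K)) (hcC : ContinuousOn c (Set.Icc 0 K))
    (hbM : MonotoneOn b (Set.Icc 0 K)) (hcM : MonotoneOn c (Set.Icc 0 K))
    (hb0 : b 0 = 0) (hc0 : c 0 = 0)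
    (hcpos : ∀ s ∈ Set.Ioc (0 : ℝ) K, 0 < c s)
    (lam : ℝ) (hlam0 : 0 < lam) (hlam1 : lam < 1)
    (ωX : ℝ) (hω0 : 0 < ωX)
    (χ : ℝ) (hχ : 1 ≤ χ)
    (κX κY γ : ℝ) (hγ : γ = χ * κY - κX)
    (p0 : ℝ)
    (hp0lb : max ((b K + χ * c K + γ) /
        ((1 - lam) * ωX * (χ + 1) * (b K + c K)) - lam / (1 - lam)) 0 ≤ p0)
    (hp0ub : p0 ≤ min (γ / ((1 - lam) * ωX * (χ + 1) * (b K + c K))) 1)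
    (p : Set.Icc (0 : ℝ) K → ℝ)
    (hp : ∀ s : Set.Icc (0 : ℝ) K,
      p s = (b ↑s + χ * c ↑s + γ) / (lam * ωX * (χ + 1) * (b K + c K))
        - ((1 - lam) / lam) * p0)
    (σX0 : Measure (Set.Icc (0 : ℝ) K))
    (hσX0 : σX0 =
      ENNReal.ofReal p0 • Measure.dirac (⟨K, Set.right_mem_Icc.mpr hK.le⟩ : Set.Icc (0 : ℝ) K)
        + ENNReal.ofReal (1 - p0) • Measure.dirac (⟨0, Set.left_mem_Icc.mpr hK.le⟩ : Set.Icc (0 : ℝ) K))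
    (σX : Set.Icc (0 : ℝ) K ⊕ Set.Icc (0 : ℝ) K → Measure (Set.Icc (0 : ℝ) K))
    (hσXs : ∀ s : Set.Icc (0 : ℝ) K ⊕ Set.Icc (0 : ℝ) K, σX s =
      ENNReal.ofReal (p (Sum.elim id id s)) • Measure.dirac (⟨K, Set.right_mem_Icc.mpr hK.le⟩ : Set.Icc (0 : ℝ) K)
        + ENNReal.ofReal (1 - p (Sum.elim id id s)) • Measure.dirac (⟨0, Set.left_mem_Icc.mpr hK.le⟩ : Set.Icc (0 : ℝ) K)) :
    (∀ s : Set.Icc (0 : ℝ) K, 0 ≤ p s ∧ p s ≤ 1) ∧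
    (∀ x : Set.Icc (0 : ℝ) K,
      -(c ↑x) - χ * b ↑x + γ =
        (-(χ + 1) * (b ↑x + c ↑x))
          - lam * ωX * (∫ s, -(χ + 1) * (b ↑s + c ↑s) ∂(σX (Sum.inl x)))
          - (1 - lam) * ωX * (∫ s, -(χ + 1) * (b ↑s + c ↑s) ∂σX0)) ∧
    (∀ y : Set.Icc (0 : ℝ) K,
      b ↑y + χ * c ↑y + γ =
        -(lam * ωX * (∫ s, -(χ + 1) * (b ↑s + c ↑s) ∂(σX (Sum.inr y))))
          - (1 - lam) * ωX * (∫ s, -(χ + 1) * (b ↑s + c ↑s) ∂σX0)) ∧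
    (∀ ν : ℕ → Measure (Set.Icc (0 : ℝ) K ⊕ Set.Icc (0 : ℝ) K),
      (∀ t, IsProbabilityMeasure (ν t)) →
      (∀ E : Set (Set.Icc (0 : ℝ) K), MeasurableSet E →
        ν 0 (Sum.inl '' E) = ENNReal.ofReal ωX * σX0 E) →
      (∀ (t : ℕ) (E : Set (Set.Icc (0 : ℝ) K)), MeasurableSet E →
        ν (t + 1) (Sum.inl '' E) = ENNReal.ofReal ωX * ∫⁻ s, σX s E ∂(ν t)) →
      ((1 - lam) * ∑' t : ℕ, lam ^ t *
          ∫ s, Sum.elim (fun x : Set.Icc (0 : ℝ) K => -(c ↑x))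
            (fun y : Set.Icc (0 : ℝ) K => b ↑y) s ∂(ν t)) - κX =
        χ * (((1 - lam) * ∑' t : ℕ, lam ^ t *
          ∫ s, Sum.elim (fun x : Set.Icc (0 : ℝ) K => b ↑x)
            (fun y : Set.Icc (0 : ℝ) K => -(c ↑y)) s ∂(ν t)) - κY)) := by
  have hcK : 0 < c K := hcpos K ⟨hK, le_rfl⟩
  have hbcK : 0 < b K + c K := by linarith [hb0 ▸ hbM ⟨le_rfl, hK.le⟩ ⟨hK.le, le_rfl⟩ hK.le]
  have hp01 : ∀ s, p s ∈ Icc 0 1 := fun s => hp s ▸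
    donation_reaction_mem_Icc hbM hcM hb0 hc0 hcK hlam0 hlam1 hω0 (by linarith)
      (le_of_max_le_left hp0lb) (le_of_le_min_left hp0ub) s.2
  have hp0 : p0 ∈ Icc 0 1 := ⟨le_of_max_le_right hp0lb, le_of_le_min_right hp0ub⟩
  have hLp : ∀ s, lam * ωX * ((χ + 1) * (b K + c K)) * p s =
      b s + χ * c s + γ - (1 - lam) * ωX * ((χ + 1) * (b K + c K)) * p0 := by
    intro s
    rw [hp s]
    field_simp
  obtain ⟨hX, hY⟩ := twoPoint_autocratic_identities (b := fun s : Icc 0 K => b s)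
    (c := fun s : Icc 0 K => c s) hb0 hc0 hLp hp01 hp0 hσX0 hσXs
  refine ⟨hp01, hX, hY, fun ν hν h0 hsucc => ?_⟩
  have hb : Continuous fun s : Icc 0 K => b s := hbC.domRestrict
  have hc : Continuous fun s : Icc 0 K => c s := hcC.domRestrict
  have hpc : Continuous p := by
    rw [funext hp]
    exact (((hb.add (continuous_const.mul hc)).add continuous_const).div_const _).sub
      continuous_const
  have hσX : Measurable σX := by
    rw [funext hσXs]
    exact measurable_smul_dirac_add_smul_dirac
      (hpc.measurable.comp (measurable_id.sumElim measurable_id)) _ _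
  have := donation_discountedPayoff_sub_mul_add_eq_zero hb hc hlam0.le hlam1 hω0.le σX0 hσX
    (fun s => hσXs s ▸ isProbabilityMeasure_smul_dirac_add_smul_dirac (hp01 _) _ _)
    hX hY ν h0 hsucc
  unfold discountedPayoff at this
  linear_combination this - hγ

/-- Two-point extortionate/generous strategies in the randomly-alternating
continuous Donation Game: under the stated conditions on `λ`, `ωX`, `χ`,
`κ_X`, `κ_Y`, `γ = χκ_Y − κ_X` and `p₀`, the reaction probabilities `p(s)`
lie in `[0,1]`, the two-point strategy `σX0 = p₀ δ_K + (1−p₀) δ_0`,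
`σX^X[x] = p(x) δ_K + (1−p(x)) δ_0`, `σX^Y[y] = p(y) δ_K + (1−p(y)) δ_0`
satisfies both autocratic identities with `ψ(s) = −(χ+1)(b(s)+c(s))`, and
consequently it unilaterally enforces `π_X − κ_X = χ (π_Y − κ_Y)` for every
strategy of player `Y`. -/
theorem stmt_17
    (K : ℝ) (hK : 0 < K) (b c : ℝ → ℝ)
    (hbC : ContinuousOn b (Set.Icc 0 K)) (hcC : ContinuousOn c (Set.Icc 0 K))
    (hbM : MonotoneOn b (Set.Icc 0 K)) (hcM : MonotoneOn c (Set.Icc 0 K))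
    (hb0 : b 0 = 0) (hc0 : c 0 = 0)
    (hcb : ∀ s ∈ Set.Ioc (0 : ℝ) K, c s < b s)
    (hcpos : ∀ s ∈ Set.Ioc (0 : ℝ) K, 0 < c s)
    (lam : ℝ) (hlam0 : 0 < lam) (hlam1 : lam < 1)
    (ωX : ℝ) (hω0 : 0 < ωX) (hω1 : ωX ≤ 1)
    (χ : ℝ) (hχ : 1 ≤ χ)
    (hlamge : (1 / ωX) * ((b K + χ * c K) / ((χ + 1) * (b K + c K))) ≤ lam)
    (κX κY γ : ℝ) (hγ : γ = χ * κY - κX)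
    (hκ1 : κX ≤ χ * κY)
    (hκ2 : χ * κY ≤ κX +
      (χ * (ωX * b K - (1 - ωX) * c K) - ((1 - ωX) * b K - ωX * c K)))
    (p0 : ℝ)
    (hp0lb : max ((b K + χ * c K + γ) /
        ((1 - lam) * ωX * (χ + 1) * (b K + c K)) - lam / (1 - lam)) 0 ≤ p0)
    (hp0ub : p0 ≤ min (γ / ((1 - lam) * ωX * (χ + 1) * (b K + c K))) 1)
    (p : Set.Icc (0 : ℝ) K → ℝ)
    (hp : ∀ s : Set.Icc (0 : ℝ) K,
      p s = (b ↑s + χ * c ↑s + γ) / (lam * ωX * (χ + 1) * (b K + c K))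
        - ((1 - lam) / lam) * p0)
    (σX0 : Measure (Set.Icc (0 : ℝ) K))
    (hσX0 : σX0 =
      ENNReal.ofReal p0 • Measure.dirac (⟨K, Set.right_mem_Icc.mpr hK.le⟩ : Set.Icc (0 : ℝ) K)
        + ENNReal.ofReal (1 - p0) • Measure.dirac (⟨0, Set.left_mem_Icc.mpr hK.le⟩ : Set.Icc (0 : ℝ) K))
    (σX : Set.Icc (0 : ℝ) K ⊕ Set.Icc (0 : ℝ) K → Measure (Set.Icc (0 : ℝ) K))
    (hσXs : ∀ s : Set.Icc (0 : ℝ) K ⊕ Set.Icc (0 : ℝ) K, σX s =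
      ENNReal.ofReal (p (Sum.elim id id s)) • Measure.dirac (⟨K, Set.right_mem_Icc.mpr hK.le⟩ : Set.Icc (0 : ℝ) K)
        + ENNReal.ofReal (1 - p (Sum.elim id id s)) • Measure.dirac (⟨0, Set.left_mem_Icc.mpr hK.le⟩ : Set.Icc (0 : ℝ) K)) :
    (∀ s : Set.Icc (0 : ℝ) K, 0 ≤ p s ∧ p s ≤ 1) ∧
    (∀ x : Set.Icc (0 : ℝ) K,
      -(c ↑x) - χ * b ↑x + γ =
        (-(χ + 1) * (b ↑x + c ↑x))
          - lam * ωX * (∫ s, -(χ + 1) * (b ↑s + c ↑s) ∂(σX (Sum.inl x)))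
          - (1 - lam) * ωX * (∫ s, -(χ + 1) * (b ↑s + c ↑s) ∂σX0)) ∧
    (∀ y : Set.Icc (0 : ℝ) K,
      b ↑y + χ * c ↑y + γ =
        -(lam * ωX * (∫ s, -(χ + 1) * (b ↑s + c ↑s) ∂(σX (Sum.inr y))))
          - (1 - lam) * ωX * (∫ s, -(χ + 1) * (b ↑s + c ↑s) ∂σX0)) ∧
    (∀ ν : ℕ → Measure (Set.Icc (0 : ℝ) K ⊕ Set.Icc (0 : ℝ) K),
      (∀ t, IsProbabilityMeasure (ν t)) →
      (∀ E : Set (Set.Icc (0 : ℝ) K), MeasurableSet E →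
        ν 0 (Sum.inl '' E) = ENNReal.ofReal ωX * σX0 E) →
      (∀ (t : ℕ) (E : Set (Set.Icc (0 : ℝ) K)), MeasurableSet E →
        ν (t + 1) (Sum.inl '' E) = ENNReal.ofReal ωX * ∫⁻ s, σX s E ∂(ν t)) →
      ((1 - lam) * ∑' t : ℕ, lam ^ t *
          ∫ s, Sum.elim (fun x : Set.Icc (0 : ℝ) K => -(c ↑x))
            (fun y : Set.Icc (0 : ℝ) K => b ↑y) s ∂(ν t)) - κX =
        χ * (((1 - lam) * ∑' t : ℕ, lam ^ t *
          ∫ s, Sum.elim (fun x : Set.Icc (0 : ℝ) K => b ↑x)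
            (fun y : Set.Icc (0 : ℝ) K => -(c ↑y)) s ∂(ν t)) - κY)) :=
  stmt_17_general K hK b c hbC hcC hbM hcM hb0 hc0 hcpos lam hlam0 hlam1 ωX hω0 χ hχ κX κY γ hγ p0
    hp0lb hp0ub p hp σX0 hσX0 σX hσXs
end
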